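/- For all nonnegative integers p, q and all real t, the convolution identity ∫_ℝ B_p(t+s) B_q(s) ds = B_{p+q+1}(p+1-t) = B_{p+q+1}(q+1+t) holds. -/

import Mathlib

/-!
Writing `B (q + 1) s = ∫ u in 0..1, B q (s - u)` and exchanging the order of integration, a
translation in `s` turns the `q + 1` case into the `q` case at `t + u`, and the remaining
integral over `u ∈ [0, 1]` is one more step of the recursion defining `B`; for `q = 0` the
identity is that recursion itself. The substitution `s ↦ s - t` exchanges the roles of `p` and
`q` and replaces `t` by `-t`, which turns the second identity into the first.
-/

open MeasureTheory Real

noncomputable def B : ℕ → ℝ → ℝ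
  | 0, t => if t ∈ Set.Ico (0:ℝ) 1 then 1 else 0
  | p + 1, t => ∫ s in (0:ℝ)..1, B p (t - s)

lemma B_zero : B 0 = (Set.Ico 0 1).indicator 1 := by
  funext t
  simp [B, Set.indicator_apply]

lemma B_succ (p : ℕ) (t : ℝ) : B (p + 1) t = ∫ u in (t - 1)..t, B p u := by
  rw [B, intervalIntegral.integral_comp_sub_left (B p) t, sub_zero]

lemma B_nonneg (p : ℕ) (t : ℝ) : 0 ≤ B p t := by
  induction p generalizing t with
  | zero => rw [B_zero]; exact Set.indicator_nonneg (fun _ _ => zero_le_one) t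
  | succ p ih =>
    rw [B_succ]
    exact intervalIntegral.integral_nonneg (by linarith) fun u _ => ih u

lemma B_le_one (p : ℕ) (t : ℝ) : B p t ≤ 1 := by
  induction p generalizing t with
  | zero => rw [B_zero]; exact Set.indicator_le_self' (fun _ _ => zero_le_one) t
  | succ p ih =>
    rw [B_succ]
    calc (∫ u in (t - 1)..t, B p u) ≤ ‖∫ u in (t - 1)..t, B p u‖ := le_abs_self _
      _ ≤ 1 * |t - (t - 1)| := intervalIntegral.norm_integral_le_of_norm_le_const
          fun u _ => by rw [norm_of_nonneg (B_nonneg p u)]; exact ih u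
      _ = 1 := by norm_num

lemma B_eq_zero_of_notMem_Ico {p : ℕ} {t : ℝ} (ht : t ∉ Set.Ico (0 : ℝ) (p + 1)) :
    B p t = 0 := by
  induction p generalizing t with
  | zero => rw [B_zero]; simpa using ht
  | succ p ih =>
    rw [B_succ, Set.mem_Ico, not_and_or, not_le, not_lt] at *
    refine intervalIntegral.integral_zero_ae (Filter.Eventually.of_forall fun u hu => ih ?_)
    rw [Set.uIoc_of_le (by linarith)] at hu
    push_cast at ht
    rw [Set.mem_Ico, not_and_or, not_le, not_lt]
    rcases ht with ht | ht
    · exact Or.inl (by linarith [hu.2])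
    · exact Or.inr (by linarith [hu.1])

lemma hasCompactSupport_B (p : ℕ) : HasCompactSupport (B p) :=
  HasCompactSupport.intro isCompact_Icc fun _ ht =>
    B_eq_zero_of_notMem_Ico fun h => ht (Set.Ico_subset_Icc_self h)

lemma continuous_intervalIntegral_sub_const {f : ℝ → ℝ} (hf : LocallyIntegrable f) (c : ℝ) :
    Continuous fun t => ∫ u in (t - c)..t, f u := by
  have hint : ∀ a b, IntervalIntegrable f volume a b := fun _ _ =>
    intervalIntegrable_iff.mpr <|
      (hf.integrableOn_isCompact isCompact_uIcc).mono_set Set.uIoc_subset_uIcc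
  have hprim := intervalIntegral.continuous_primitive hint 0
  refine (hprim.sub (hprim.comp (continuous_sub_right c))).congr fun t => ?_
  exact intervalIntegral.integral_interval_sub_left (hint _ _) (hint _ _)

lemma integrable_B (p : ℕ) : Integrable (B p) := by
  induction p with
  | zero =>
    rw [B_zero]
    exact (integrableOn_const (by simp)).integrable_indicator measurableSet_Ico
  | succ p ih =>
    have hcont : Continuous (B (p + 1)) := by
      simpa only [← B_succ] using continuous_intervalIntegral_sub_const ih.locallyIntegrable 1
    exact hcont.integrable_of_hasCompactSupport (hasCompactSupport_B _)

lemma continuous_B_succ (p : ℕ) : Continuous (B (p + 1)) := by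
  simpa only [← B_succ] using
    continuous_intervalIntegral_sub_const (integrable_B p).locallyIntegrable 1

lemma measurable_B (p : ℕ) : Measurable (B p) := by
  cases p with
  | zero => exact B_zero ▸ measurable_const.indicator measurableSet_Ico
  | succ p => exact (continuous_B_succ p).measurable

lemma integrable_B_add_mul_B_sub (p q : ℕ) (t : ℝ) :
    Integrable (Function.uncurry fun s u => B p (t + s) * B q (s - u))
      (volume.prod (volume.restrict (Set.Ioc (0 : ℝ) 1))) := by
  have hdom : Integrable (fun z : ℝ × ℝ => B p (t + z.1) * 1)
      (volume.prod (volume.restrict (Set.Ioc (0 : ℝ) 1))) :=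
    ((integrable_B p).comp_add_left t).mul_prod (integrable_const 1)
  refine hdom.mono' ?_ (Filter.Eventually.of_forall fun z => ?_)
  · exact ((measurable_B p).comp (measurable_fst.const_add t)).mul
      ((measurable_B q).comp (measurable_fst.sub measurable_snd)) |>.aestronglyMeasurable
  · rw [Function.uncurry_apply_pair, norm_mul, norm_of_nonneg (B_nonneg _ _),
      norm_of_nonneg (B_nonneg _ _)]
    exact mul_le_mul_of_nonneg_left (B_le_one q _) (B_nonneg p _)

lemma integral_B_add_mul_B (p q : ℕ) (t : ℝ) :
    ∫ s, B p (t + s) * B q s = B (p + q + 1) (q + 1 + t) := by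
  induction q generalizing t with
  | zero =>
    have hind : (fun s => B p (t + s) * B 0 s) =
        (Set.Ico 0 1).indicator fun s => B p (t + s) := by
      ext s
      simp only [B_zero, Set.indicator_apply, Pi.one_apply, mul_ite, mul_one, mul_zero]
    rw [hind, integral_indicator measurableSet_Ico, integral_Ico_eq_integral_Ioc,
      ← intervalIntegral.integral_of_le zero_le_one, intervalIntegral.integral_comp_add_left,
      Nat.add_zero, B_succ]
    congr 1 <;> push_cast <;> ring
  | succ q ih =>
    calc ∫ s, B p (t + s) * B (q + 1) s
        = ∫ s, ∫ u in Set.Ioc (0 : ℝ) 1, B p (t + s) * B q (s - u) := by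
          congr 1; funext s
          rw [B, intervalIntegral.integral_of_le zero_le_one, integral_const_mul]
      _ = ∫ u in Set.Ioc (0 : ℝ) 1, ∫ s, B p (t + s) * B q (s - u) :=
          integral_integral_swap (integrable_B_add_mul_B_sub p q t)
      _ = ∫ u in Set.Ioc (0 : ℝ) 1, B (p + q + 1) (q + 1 + t + u) := by
          congr 1; funext u
          rw [← integral_add_right_eq_self _ u, add_assoc _ t u, ← ih]
          congr 1 with s
          rw [add_sub_cancel_right, add_assoc, add_comm u]
      _ = B (p + (q + 1) + 1) ((q + 1 : ℕ) + 1 + t) := by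
          rw [← intervalIntegral.integral_of_le zero_le_one,
            intervalIntegral.integral_comp_add_left, B_succ]
          push_cast; ring_nf

theorem bspline_convolution (p q : ℕ) (t : ℝ) :
    (∫ s : ℝ, B p (t + s) * B q s) = B (p + q + 1) ((p : ℝ) + 1 - t) ∧
    (∫ s : ℝ, B p (t + s) * B q s) = B (p + q + 1) ((q : ℝ) + 1 + t) := by
  have hswap : ∫ s, B p (t + s) * B q s = ∫ s, B q (-t + s) * B p s := by
    rw [← integral_add_right_eq_self _ (-t)]
    congr 1 with s
    rw [mul_comm, add_comm s, add_neg_cancel_left]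
  refine ⟨?_, integral_B_add_mul_B p q t⟩
  rw [hswap, integral_B_add_mul_B, add_comm q p, ← sub_eq_add_neg]
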